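/- arXiv:1711.01317 — 2 statements merged into one kernel-verified Lean document; each statement's English description precedes it below -/
import Mathlib

section
/- Let f : [a,b] → ℝ be continuously differentiable with f' positive and monotone on (a,b), and suppose inf_{(a,b)} f' = μ > 0. Then |∫_a^b e^{i f(y)} dy| ≤ C/μ for an absolute constant C (one may take C = 4). -/
/-!
On `(a, b)` write `e^{if} = (1 / f') • (e^{if} f')` and expand the weight `0 ≤ 1 / f' ≤ 1 / μ` in
layers, `1 / f'(y) = ∫₀^{1/μ} 𝟙[t < 1 / f'(y)] dt`. After Fubini each layer is the integral of the
exact derivative `e^{if} f' = (-i e^{if})'` over the superlevel set `{t < 1 / f'}`, which is an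
interval because `f'` is monotone; hence every layer has norm at most `2`, and the integral has
norm at most `2 / μ`.
-/

open Set MeasureTheory Complex

section LayerCake

variable {α E : Type*} [MeasurableSpace α] {μ : Measure α} [SFinite μ]
  [NormedAddCommGroup E] [NormedSpace ℝ E] [CompleteSpace E]

theorem setIntegral_smul_eq_setIntegral_setIntegral_superlevel
    {S : Set α} {g : α → ℝ} {v : α → E} {M : ℝ}
    (hS : MeasurableSet S) (hg : Measurable g) (hv : IntegrableOn v S μ)
    (hg_nonneg : ∀ x ∈ S, 0 ≤ g x) (hg_le : ∀ x ∈ S, g x ≤ M) :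
    ∫ x in S, g x • v x ∂μ = ∫ t in Ico 0 M, ∫ x in S ∩ {x | t < g x}, v x ∂μ := by
  set w := S.indicator v
  set U : Set (α × ℝ) := {p | p.1 ∈ S ∧ p.2 ∈ Ico 0 (g p.1)}
  set F : α × ℝ → E := U.indicator fun p => w p.1
  have hw : Integrable w μ := (integrable_indicator_iff hS).2 hv
  have hF : Integrable F (μ.prod volume) := by
    have hIco : Integrable ((Ico 0 M).indicator (1 : ℝ → ℝ)) volume :=
      (integrable_indicator_iff measurableSet_Ico).2 (integrableOn_const (by simp))
    refine (hw.norm.mul_prod hIco).mono'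
      (hw.aestronglyMeasurable.comp_fst.indicator
        (measurableSet_region_between_co measurable_const hg hS)) (.of_forall fun p => ?_)
    by_cases hp : p ∈ U
    · have hM : p.2 ∈ Ico 0 M := ⟨hp.2.1, hp.2.2.trans_le (hg_le _ hp.1)⟩
      simp [F, indicator_of_mem hp, indicator_of_mem hM]
    · simp only [F, indicator_of_notMem hp, norm_zero]
      exact mul_nonneg (norm_nonneg _) (indicator_nonneg (fun _ _ => zero_le_one) _)
  have h_inner_t : ∀ x, ∫ t, F (x, t) = g x • w x := by
    intro x
    by_cases hx : x ∈ S
    · have : (fun t => F (x, t)) = (Ico 0 (g x)).indicator fun _ => w x := by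
        ext t; simp [F, U, hx, indicator]
      rw [this, integral_indicator_const _ measurableSet_Ico,
        Real.volume_real_Ico_of_le (hg_nonneg x hx), sub_zero]
    · simp [F, U, w, hx]
  have h_inner_x : ∀ t, ∫ x, F (x, t) ∂μ =
      (Ico 0 M).indicator (fun t => ∫ x in S ∩ {x | t < g x}, v x ∂μ) t := by
    intro t
    by_cases ht : t ∈ Ico 0 M
    · have : (fun x => F (x, t)) = (S ∩ {x | t < g x}).indicator v := by
        ext x; by_cases hx : x ∈ S <;> simp [F, U, w, hx, ht.1, indicator]
      rw [this, integral_indicator (hS.inter (measurableSet_lt measurable_const hg)),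
        indicator_of_mem ht]
    · have : (fun x => F (x, t)) = 0 := by
        ext x
        refine indicator_of_notMem (fun hxt => ht ⟨hxt.2.1, ?_⟩) _
        exact hxt.2.2.trans_le (hg_le _ hxt.1)
      simp [this, indicator_of_notMem ht]
  rw [← integral_indicator measurableSet_Ico, ← integral_indicator hS]
  simp only [← h_inner_x, indicator_smul]
  rw [← integral_integral_swap (f := fun x t => F (x, t)) hF]
  simp only [h_inner_t, w]

theorem norm_setIntegral_smul_le_of_forall_norm_setIntegral_superlevel_le
    {S : Set α} {g : α → ℝ} {v : α → E} {M K : ℝ}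
    (hS : MeasurableSet S) (hg : Measurable g) (hv : IntegrableOn v S μ) (hM : 0 ≤ M)
    (hg_nonneg : ∀ x ∈ S, 0 ≤ g x) (hg_le : ∀ x ∈ S, g x ≤ M)
    (hK : ∀ t ∈ Ico 0 M, ‖∫ x in S ∩ {x | t < g x}, v x ∂μ‖ ≤ K) :
    ‖∫ x in S, g x • v x ∂μ‖ ≤ M * K := by
  rw [setIntegral_smul_eq_setIntegral_setIntegral_superlevel hS hg hv hg_nonneg hg_le]
  calc _ ≤ K * volume.real (Ico 0 M) := norm_setIntegral_le_of_norm_le_const (by simp) hK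
    _ = M * K := by rw [Real.volume_real_Ico_of_le hM, sub_zero, mul_comm]

end LayerCake

theorem Set.OrdConnected.inter_setOf_lt_of_monotoneOn_or_antitoneOn {α β : Type*}
    [Preorder α] [Preorder β] {S : Set α} {φ : α → β} (hS : S.OrdConnected)
    (hφ : MonotoneOn φ S ∨ AntitoneOn φ S) (t : β) : (S ∩ {x | t < φ x}).OrdConnected := by
  refine ⟨fun x hx y hy z hz => ⟨hS.out hx.1 hy.1 hz, ?_⟩⟩
  have hzS := hS.out hx.1 hy.1 hz
  rcases hφ with hmono | hanti
  · exact hx.2.trans_le (hmono hx.1 hzS hz.1)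
  · exact hy.2.trans_le (hanti hzS hy.1 hz.2)

theorem continuousOn_cexp_I_mul_mul_deriv {f f' : ℝ → ℝ} {s : Set ℝ}
    (hderiv : ∀ y ∈ s, HasDerivAt f (f' y) y) (hcont : ContinuousOn f' s) :
    ContinuousOn (fun y => exp (I * f y) * f' y) s := by
  have hf : ContinuousOn f s := fun y hy => (hderiv y hy).continuousAt.continuousWithinAt
  fun_prop

theorem norm_integral_cexp_I_mul_mul_deriv_le_two {f f' : ℝ → ℝ} {c d : ℝ}
    (hderiv : ∀ y ∈ uIcc c d, HasDerivAt f (f' y) y) (hcont : ContinuousOn f' (uIcc c d)) :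
    ‖∫ y in c..d, exp (I * f y) * f' y‖ ≤ 2 := by
  set G : ℝ → ℂ := fun y => -I * exp (I * f y)
  have hG : ∀ y ∈ uIcc c d, HasDerivAt G (exp (I * f y) * f' y) y := fun y hy =>
    ((((hderiv y hy).ofReal_comp).const_mul I).cexp.const_mul (-I)).congr_deriv
      (by linear_combination (-(exp (I * f y) * f' y)) * I_sq)
  rw [intervalIntegral.integral_eq_sub_of_hasDerivAt hG
    (continuousOn_cexp_I_mul_mul_deriv hderiv hcont).intervalIntegrable]
  calc ‖G d - G c‖ ≤ ‖G d‖ + ‖G c‖ := norm_sub_le _ _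
    _ = 2 := by norm_num [G, norm_exp_I_mul_ofReal]

theorem norm_setIntegral_cexp_I_mul_mul_deriv_le_two {f f' : ℝ → ℝ} {a b : ℝ} {T : Set ℝ}
    (hT : T.OrdConnected) (hTab : T ⊆ Icc a b)
    (hderiv : ∀ y ∈ Icc a b, HasDerivAt f (f' y) y) (hcont : ContinuousOn f' (Icc a b)) :
    ‖∫ y in T, exp (I * f y) * f' y‖ ≤ 2 := by
  rcases T.eq_empty_or_nonempty with rfl | hne
  · simp
  have hbb : BddBelow T := bddBelow_Icc.mono hTab
  have hba : BddAbove T := bddAbove_Icc.mono hTab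
  have hcd : sInf T ≤ sSup T := csInf_le_csSup hne hbb hba
  have hT_ae : T =ᵐ[volume] Ioo (sInf T) (sSup T) :=
    ((subset_Icc_csInf_csSup hbb hba).eventuallyLE.trans Ioo_ae_eq_Icc.symm.le).antisymm
      (IsConnected.Ioo_csInf_csSup_subset ⟨hne, hT.isPreconnected⟩ hbb hba).eventuallyLE
  have hsub : uIcc (sInf T) (sSup T) ⊆ Icc a b := by
    rw [uIcc_of_le hcd]
    exact Icc_subset_Icc (le_csInf hne fun y hy => (hTab hy).1) (csSup_le hne fun y hy => (hTab hy).2)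
  rw [setIntegral_congr_set hT_ae, ← integral_Ioc_eq_integral_Ioo,
    ← intervalIntegral.integral_of_le hcd]
  exact norm_integral_cexp_I_mul_mul_deriv_le_two (fun y hy => hderiv y (hsub hy))
    (hcont.mono hsub)

theorem monotoneOn_or_antitoneOn_inv_of_pos {α : Type*} [Preorder α] {φ : α → ℝ} {s : Set α}
    (hpos : ∀ x ∈ s, 0 < φ x) (hφ : MonotoneOn φ s ∨ AntitoneOn φ s) :
    MonotoneOn (fun x => (φ x)⁻¹) s ∨ AntitoneOn (fun x => (φ x)⁻¹) s := by
  rcases hφ with hmono | hanti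
  · exact Or.inr fun x hx y hy hxy => inv_anti₀ (hpos x hx) (hmono hx hy hxy)
  · exact Or.inl fun x hx y hy hxy => inv_anti₀ (hpos y hy) (hanti hx hy hxy)

theorem first_derivative_oscillatory_bound_general
    (a b : ℝ) (hab : a < b) (f f' : ℝ → ℝ) (mu : ℝ) (hmu : 0 < mu)
    (hderiv : ∀ y ∈ Icc a b, HasDerivAt f (f' y) y)
    (hcont : ContinuousOn f' (Icc a b))
    (hmono : MonotoneOn f' (Ioo a b) ∨ AntitoneOn f' (Ioo a b))
    (hinf : ∀ y ∈ Ioo a b, mu ≤ f' y) :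
    ‖∫ y in a..b, Complex.exp (Complex.I * (f y : ℂ))‖ ≤ 4 / mu := by
  have hf'_pos : ∀ y ∈ Ioo a b, 0 < f' y := fun y hy => hmu.trans_le (hinf y hy)
  -- extended by `0` off `(a, b)` to make it measurable, as `f'` is arbitrary there
  set g : ℝ → ℝ := (Ioo a b).piecewise (fun y => (f' y)⁻¹) 0
  have hg : EqOn g (fun y => (f' y)⁻¹) (Ioo a b) := piecewise_eqOn _ _ _
  have hg_meas : Measurable g :=
    ((hcont.mono Ioo_subset_Icc_self).inv₀ fun y hy => (hf'_pos y hy).ne').measurable_piecewise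
      continuousOn_const measurableSet_Ioo
  have hg_mono : MonotoneOn g (Ioo a b) ∨ AntitoneOn g (Ioo a b) :=
    (monotoneOn_or_antitoneOn_inv_of_pos hf'_pos hmono).imp (·.congr hg.symm) (·.congr hg.symm)
  have hbound := norm_setIntegral_smul_le_of_forall_norm_setIntegral_superlevel_le
    measurableSet_Ioo hg_meas
    ((continuousOn_cexp_I_mul_mul_deriv hderiv hcont).integrableOn_Icc.mono_set Ioo_subset_Icc_self)
    (inv_nonneg.2 hmu.le) (fun y hy => hg hy ▸ (inv_pos.2 (hf'_pos y hy)).le)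
    (fun y hy => hg hy ▸ inv_anti₀ hmu (hinf y hy))
    (fun t _ => norm_setIntegral_cexp_I_mul_mul_deriv_le_two
      (ordConnected_Ioo.inter_setOf_lt_of_monotoneOn_or_antitoneOn hg_mono t)
      (inter_subset_left.trans Ioo_subset_Icc_self) hderiv hcont)
  have hweight : ∫ y in a..b, exp (I * f y) = ∫ y in Ioo a b, g y • (exp (I * f y) * f' y) := by
    rw [intervalIntegral.integral_of_le hab.le, integral_Ioc_eq_integral_Ioo]
    refine setIntegral_congr_fun measurableSet_Ioo fun y hy => ?_
    have hf'_ne : (f' y : ℂ) ≠ 0 := ofReal_ne_zero.2 (hf'_pos y hy).ne'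
    rw [hg hy, real_smul, ofReal_inv]
    field_simp
  calc ‖∫ y in a..b, exp (I * f y)‖ ≤ mu⁻¹ * 2 := hweight ▸ hbound
    _ ≤ 4 / mu := by rw [inv_mul_eq_div]; gcongr; norm_num

theorem first_derivative_oscillatory_bound
    (a b : ℝ) (hab : a < b) (f f' : ℝ → ℝ) (mu : ℝ) (hmu : 0 < mu)
    (hderiv : ∀ y ∈ Icc a b, HasDerivAt f (f' y) y)
    (hcont : ContinuousOn f' (Icc a b))
    (hpos : ∀ y ∈ Ioo a b, 0 < f' y)
    (hmono : MonotoneOn f' (Ioo a b) ∨ AntitoneOn f' (Ioo a b))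
    (hinf : ∀ y ∈ Ioo a b, mu ≤ f' y) :
    ‖∫ y in a..b, Complex.exp (Complex.I * (f y : ℂ))‖ ≤ 4 / mu :=
  first_derivative_oscillatory_bound_general a b hab f f' mu hmu hderiv hcont hmono hinf
end

section
/- For every integer m ≥ 1 and every θ ∈ (0, π), the Legendre polynomial satisfies P_m(cos θ)² ≤ (2/π) · 1/(m sin θ). -/
/-!
For `u(θ) = √(sin θ) P_m(cos θ)`, Legendre's equation reads `u'' + φ u = 0` with
`φ(θ) = (m + 1/2)² + 1/(4 sin² θ)`. As `φ` decreases on `(0, π/2]` and is symmetric about `π/2`,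
Sonine's function `u² + u'²/φ` increases up to `π/2` and decreases after it, so
`sin θ · P_m(cos θ)² = u(θ)²` is at most its value `P_m(0)² + 4 P_m'(0)²/((2m+1)² + 1)` at `π/2`.
By parity one of `P_m(0)`, `P_m'(0)` vanishes and the other is, up to sign, `C(2k, k)/4^k` (times
`2k + 1` in odd degree), and Wallis' inequality bounds this value by `2/(π m)`.
-/

/-- The Legendre polynomial of degree `m` (normalized so that `P_m(1) = 1`),
defined by the Rodrigues formula. -/
noncomputable def legendreP (m : ℕ) : Polynomial ℝ :=
  Polynomial.C (1 / (2 ^ m * (Nat.factorial m : ℝ))) *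
    (Polynomial.derivative^[m] ((Polynomial.X ^ 2 - 1) ^ m))

open Polynomial Real Set Nat

theorem X_sq_sub_one_mul_derivative_pow {R : Type*} [CommRing R] (m : ℕ) :
    (X ^ 2 - 1 : R[X]) * derivative ((X ^ 2 - 1) ^ m) =
      2 * (m : R[X]) * X * (X ^ 2 - 1) ^ m := by
  cases m with
  | zero => simp
  | succ n =>
    rw [derivative_pow_succ, derivative_sub, derivative_X_sq, derivative_one, C_ofNat,
      map_add, map_natCast, map_one]
    push_cast
    ring

theorem iterate_derivative_X_sq_sub_one_pow {R : Type*} [CommRing R] (m : ℕ) :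
    (1 - X ^ 2) * derivative^[m + 2] ((X ^ 2 - 1 : R[X]) ^ m)
      - 2 * X * derivative^[m + 1] ((X ^ 2 - 1) ^ m)
      + (m * (m + 1) : R[X]) * derivative^[m] ((X ^ 2 - 1) ^ m) = 0 := by
  set v : R[X] := (X ^ 2 - 1) ^ m
  have h1 := congrArg derivative (X_sq_sub_one_mul_derivative_pow (R := R) m)
  simp only [derivative_mul, derivative_sub, derivative_X_sq, derivative_one, derivative_X,
    derivative_ofNat, derivative_natCast, C_ofNat] at h1
  -- written with `ℕ`-scalars and no negative coefficient, the form in which Mathlib's Leibniz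
  -- rules `iterate_derivative_derivative_mul_X(_sq)` apply
  have h2 : derivative^[2] v * X ^ 2 - derivative^[2] v + 2 • (derivative v * X)
      = (2 * m) • (derivative v * X) + (2 * m) • v := by
    simp only [Function.iterate_succ_apply', Function.iterate_zero_apply, nsmul_eq_mul] at h1 ⊢
    push_cast
    linear_combination h1
  have h3 := congrArg (derivative^[m]) h2
  simp only [iterate_derivative_sub, iterate_map_add, iterate_derivative_smul,
    iterate_derivative_derivative_mul_X_sq, iterate_derivative_derivative_mul_X,
    ← Function.iterate_add_apply] at h3
  rcases m with _ | n
  · simp [v]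
  · simp only [nsmul_eq_mul, Nat.add_sub_cancel] at h3
    push_cast at h3 ⊢
    linear_combination -h3

theorem legendreP_ode (m : ℕ) (x : ℝ) :
    (1 - x ^ 2) * (derivative (derivative (legendreP m))).eval x
      - 2 * x * (derivative (legendreP m)).eval x + m * (m + 1) * (legendreP m).eval x = 0 := by
  have h := congrArg (fun q => 1 / (2 ^ m * m ! : ℝ) * q.eval x)
    (iterate_derivative_X_sq_sub_one_pow (R := ℝ) m)
  simp only [eval_add, eval_sub, eval_mul, eval_pow, eval_X, eval_one, eval_ofNat, eval_natCast,
    eval_zero, mul_zero, Function.iterate_succ_apply'] at h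
  simp only [legendreP, derivative_C_mul, eval_mul, eval_C]
  linear_combination h

theorem coeff_X_sq_sub_one_pow {R : Type*} [CommRing R] (m n : ℕ) :
    ((X ^ 2 - 1 : R[X]) ^ m).coeff n =
      if 2 ∣ n then (-1 : R) ^ (m - n / 2) * m.choose (n / 2) else 0 := by
  have : (X ^ 2 - 1 : R[X]) ^ m = expand R 2 ((X + C (-1)) ^ m) := by
    simp [sub_eq_add_neg]
  rw [this, coeff_expand two_pos, coeff_X_add_C_pow]

theorem legendreP_eval_zero (m : ℕ) :
    (legendreP m).eval 0 = ((X ^ 2 - 1 : ℝ[X]) ^ m).coeff m / 2 ^ m := by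
  rw [legendreP, eval_mul, eval_C, ← coeff_zero_eq_eval_zero, coeff_iterate_derivative, zero_add,
    descFactorial_self, nsmul_eq_mul]
  field_simp

theorem derivative_legendreP_eval_zero (m : ℕ) :
    (derivative (legendreP m)).eval 0 =
      (m + 1) * ((X ^ 2 - 1 : ℝ[X]) ^ m).coeff (m + 1) / 2 ^ m := by
  rw [legendreP, derivative_C_mul, eval_mul, eval_C, ← Function.iterate_succ_apply' derivative,
    ← coeff_zero_eq_eval_zero, coeff_iterate_derivative, zero_add, descFactorial_self,
    nsmul_eq_mul, factorial_succ]
  push_cast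
  field_simp

theorem legendreP_two_mul_eval_zero (k : ℕ) :
    (legendreP (2 * k)).eval 0 = (-1) ^ k * (centralBinom k / 4 ^ k) := by
  rw [legendreP_eval_zero, coeff_X_sq_sub_one_pow, if_pos (dvd_mul_right 2 k),
    Nat.mul_div_cancel_left k two_pos, two_mul, Nat.add_sub_cancel, ← two_mul,
    ← centralBinom_eq_two_mul_choose, pow_mul]
  norm_num
  ring

theorem derivative_legendreP_two_mul_eval_zero (k : ℕ) :
    (derivative (legendreP (2 * k))).eval 0 = 0 := by
  rw [derivative_legendreP_eval_zero, coeff_X_sq_sub_one_pow, if_neg (by omega)]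
  simp

theorem legendreP_two_mul_add_one_eval_zero (k : ℕ) :
    (legendreP (2 * k + 1)).eval 0 = 0 := by
  rw [legendreP_eval_zero, coeff_X_sq_sub_one_pow, if_neg (by omega)]
  simp

theorem derivative_legendreP_two_mul_add_one_eval_zero (k : ℕ) :
    (derivative (legendreP (2 * k + 1))).eval 0 =
      (-1) ^ k * ((2 * k + 1) * (centralBinom k / 4 ^ k)) := by
  have hchoose : ((2 * k + 1).choose (k + 1) : ℝ) * (k + 1) = (2 * k + 1) * centralBinom k := by
    rw [centralBinom_eq_two_mul_choose]
    exact_mod_cast (add_one_mul_choose_eq (2 * k) k).symm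
  rw [derivative_legendreP_eval_zero, coeff_X_sq_sub_one_pow, if_pos ⟨k + 1, by ring⟩,
    show (2 * k + 1 + 1) / 2 = k + 1 by omega, show 2 * k + 1 - (k + 1) = k by omega, pow_succ,
    pow_mul]
  push_cast
  field_simp
  linear_combination 2 * 4 ^ k * hchoose

theorem Real.Wallis.W_mul_sq_centralBinom_div_four_pow (k : ℕ) :
    Wallis.W k * (2 * k + 1) * (centralBinom k / 4 ^ k) ^ 2 = 1 := by
  induction k with
  | zero => simp [Wallis.W]
  | succ k ih =>
    have hrec : ((k + 1 : ℕ) : ℝ) * centralBinom (k + 1) = 2 * (2 * k + 1) * centralBinom k :=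
      mod_cast succ_mul_centralBinom_succ k
    have hc : (centralBinom (k + 1) / 4 ^ (k + 1) : ℝ)
        = (2 * k + 1) / (2 * k + 2) * (centralBinom k / 4 ^ k) := by
      push_cast at hrec
      field_simp
      linear_combination 2 * 4 ^ k * hrec
    rw [Wallis.W_succ, hc]
    convert ih using 1
    push_cast
    field_simp
    ring

theorem sq_centralBinom_div_four_pow_le (k : ℕ) :
    ((centralBinom k : ℝ) / 4 ^ k) ^ 2 ≤ 4 * (k + 1) / (π * (2 * k + 1) ^ 2) := by
  have hW := Wallis.le_W k
  have h1 := Wallis.W_mul_sq_centralBinom_div_four_pow k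
  rw [le_div_iff₀ (by positivity)]
  have hc : 0 ≤ (2 * k + 1) * ((centralBinom k : ℝ) / 4 ^ k) ^ 2 := by positivity
  field_simp at hW
  linear_combination (mul_le_mul_of_nonneg_right hW hc) + 4 * (k + 1) * h1

theorem legendreP_eval_zero_sq_add_le {m : ℕ} (hm : 1 ≤ m) :
    (legendreP m).eval 0 ^ 2 + 4 * (derivative (legendreP m)).eval 0 ^ 2 / ((2 * m + 1) ^ 2 + 1)
      ≤ 2 / (π * m) := by
  have hsign (k : ℕ) : ((-1 : ℝ) ^ k) ^ 2 = 1 := by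
    rw [← pow_mul, pow_mul', neg_one_sq, one_pow]
  obtain ⟨k, rfl | rfl⟩ := even_or_odd' m
  · rw [legendreP_two_mul_eval_zero, derivative_legendreP_two_mul_eval_zero]
    calc _ = ((centralBinom k : ℝ) / 4 ^ k) ^ 2 := by rw [mul_pow, hsign]; ring
      _ ≤ 4 * (k + 1) / (π * (2 * k + 1) ^ 2) := sq_centralBinom_div_four_pow_le k
      _ ≤ 2 / (π * ↑(2 * k)) := by
        rw [div_le_div_iff₀ (by positivity) (by positivity)]
        push_cast
        nlinarith [pi_pos]
  · rw [legendreP_two_mul_add_one_eval_zero, derivative_legendreP_two_mul_add_one_eval_zero]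
    calc _ = 4 * (2 * k + 1) ^ 2 * ((centralBinom k : ℝ) / 4 ^ k) ^ 2 /
            ((4 * k + 3) ^ 2 + 1) := by
          rw [mul_pow, hsign]; push_cast; ring
      _ ≤ 4 * (2 * k + 1) ^ 2 * (4 * (k + 1) / (π * (2 * k + 1) ^ 2)) /
            ((4 * k + 3) ^ 2 + 1) := by
          gcongr; exact sq_centralBinom_div_four_pow_le k
      _ ≤ 2 / (π * ↑(2 * k + 1)) := by
        rw [div_le_div_iff₀ (by positivity) (by positivity)]
        field_simp
        push_cast
        nlinarith [pi_pos]

/-- Sonine's function `u² + u'²/φ` for `u(t) = √(sin t) · p(cos t)` and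
`φ(t) = (μ + 1/2)² + 1/(4 sin² t)`, with the square roots cleared. -/
noncomputable def sonine (μ : ℝ) (p : ℝ[X]) (t : ℝ) : ℝ :=
  sin t * (p.eval (cos t) ^ 2 +
    (cos t * p.eval (cos t) - 2 * sin t ^ 2 * (derivative p).eval (cos t)) ^ 2 /
      ((2 * μ + 1) ^ 2 * sin t ^ 2 + 1))

theorem sin_mul_sq_le_sonine (μ : ℝ) (p : ℝ[X]) {t : ℝ} (ht : 0 ≤ sin t) :
    sin t * p.eval (cos t) ^ 2 ≤ sonine μ p t :=
  mul_le_mul_of_nonneg_left (le_add_of_nonneg_right (by positivity)) ht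

theorem sonine_pi_div_two (μ : ℝ) (p : ℝ[X]) :
    sonine μ p (π / 2) =
      p.eval 0 ^ 2 + 4 * (derivative p).eval 0 ^ 2 / ((2 * μ + 1) ^ 2 + 1) := by
  simp [sonine]
  ring

section
variable {μ : ℝ} {p : ℝ[X]}
  (hp : ∀ x, (1 - x ^ 2) * (derivative (derivative p)).eval x - 2 * x * (derivative p).eval x
    + μ * (μ + 1) * p.eval x = 0)
include hp

theorem hasDerivAt_sonine (t : ℝ) :
    HasDerivAt (sonine μ p)
      (2 * cos t * (cos t * p.eval (cos t) - 2 * sin t ^ 2 * (derivative p).eval (cos t)) ^ 2 /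
        ((2 * μ + 1) ^ 2 * sin t ^ 2 + 1) ^ 2) t := by
  have hD : (2 * μ + 1) ^ 2 * sin t ^ 2 + 1 ≠ 0 := by positivity
  have hc := hasDerivAt_cos t
  have hs2 := (hasDerivAt_sin t).pow 2
  have hP := (p.hasDerivAt (cos t)).comp t hc
  have hQ := ((derivative p).hasDerivAt (cos t)).comp t hc
  have hG := (hc.mul hP).sub ((hs2.const_mul 2).mul hQ)
  refine ((hasDerivAt_sin t).mul ((hP.pow 2).add ((hG.pow 2).div
    ((hs2.const_mul ((2 * μ + 1) ^ 2)).add_const 1) hD))).congr_deriv ?_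
  have hode := hp (cos t)
  have hsc := sin_sq_add_cos_sq t
  simp only [Pi.add_apply, Pi.mul_apply, Pi.sub_apply, Pi.pow_apply, Pi.div_apply,
    Function.comp_apply]
  push_cast
  field_simp
  linear_combination (4 * sin t ^ 2 * ((2 * μ + 1) ^ 2 * sin t ^ 2 + 1) *
      (cos t * p.eval (cos t) - 2 * sin t ^ 2 * (derivative p).eval (cos t))) * hode
    + (((2 * μ + 1) ^ 2 * sin t ^ 2 + 1) *
      (cos t * p.eval (cos t) - 2 * sin t ^ 2 * (derivative p).eval (cos t)) *
      (4 * sin t ^ 2 * (derivative (derivative p)).eval (cos t) - p.eval (cos t))) * hsc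

theorem sonine_le_sonine_pi_div_two {t : ℝ} (ht : t ∈ Icc 0 π) :
    sonine μ p t ≤ sonine μ p (π / 2) := by
  have hcont : ∀ s, ContinuousOn (sonine μ p) s := fun s x _ =>
    (hasDerivAt_sonine hp x).continuousAt.continuousWithinAt
  have hderiv : ∀ s, ∀ x ∈ s, HasDerivWithinAt (sonine μ p) _ s x := fun s x _ =>
    (hasDerivAt_sonine hp x).hasDerivWithinAt
  rcases le_total t (π / 2) with h | h
  · refine monotoneOn_of_hasDerivWithinAt_nonneg (convex_Icc t (π / 2)) (hcont _) (hderiv _)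
      (fun x hx => ?_) (left_mem_Icc.2 h) (right_mem_Icc.2 h) h
    rw [interior_Icc] at hx
    have := cos_nonneg_of_mem_Icc ⟨by linarith [ht.1, hx.1, pi_pos], hx.2.le⟩
    positivity
  · refine antitoneOn_of_hasDerivWithinAt_nonpos (convex_Icc (π / 2) t) (hcont _) (hderiv _)
      (fun x hx => ?_) (left_mem_Icc.2 h) (right_mem_Icc.2 h) h
    rw [interior_Icc] at hx
    have := cos_nonpos_of_pi_div_two_le_of_le hx.1.le (by linarith [ht.2, hx.2, pi_pos])
    exact div_nonpos_of_nonpos_of_nonneg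
      (mul_nonpos_of_nonpos_of_nonneg (by linarith) (sq_nonneg _)) (sq_nonneg _)

end

theorem bernstein_inequality_legendre (m : ℕ) (hm : 1 ≤ m) (θ : ℝ)
    (hθ : θ ∈ Set.Ioo 0 Real.pi) :
    ((legendreP m).eval (Real.cos θ)) ^ 2 ≤ (2 / Real.pi) * (1 / (m * Real.sin θ)) := by
  have hsin : 0 < sin θ := sin_pos_of_pos_of_lt_pi hθ.1 hθ.2
  have key : sin θ * (legendreP m).eval (cos θ) ^ 2 ≤ 2 / (π * m) :=
    calc _ ≤ sonine m (legendreP m) θ := sin_mul_sq_le_sonine _ _ hsin.le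
      _ ≤ sonine m (legendreP m) (π / 2) :=
        sonine_le_sonine_pi_div_two (legendreP_ode m) (Ioo_subset_Icc_self hθ)
      _ = _ := sonine_pi_div_two _ _
      _ ≤ 2 / (π * m) := legendreP_eval_zero_sq_add_le hm
  rw [show 2 / π * (1 / (m * sin θ)) = 2 / (π * m) / sin θ by ring, le_div_iff₀ hsin]
  linarith
end
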